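/- Weyl-sequence property: let ω ∈ ℝ, let φ : ℕ → ℂ solve the eigenvalue recurrence for ω and have plane-wave asymptotics with amplitude A, and let g : ℝ → ℝ be a Schwartz function. For k ≥ 1 define v_k : ℕ → ℂ by v_k n = k^(−1/2)·g(χ(n/2)/k)·φ n (and v_k 0 = 0). Then lim_{k→∞} Σ_{n=1}^∞ |ω·(v_k n) − Complex.I·(n/2 + 3/4)·(v_k (n+1)) + Complex.I·(n/2 + 1/4)·(v_k (n−1))|² = 0, i.e. ‖(ω − H_I)v_k‖² → 0 in ℓ². -/

import Mathlib

/-- ξ(y) = √(y² + 1/16). -/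
noncomputable def xi (y : ℝ) : ℝ := Real.sqrt (y ^ 2 + 1 / 16)

/-- χ(x) = log(2·√(4x² + 4x + 1) + √(16x² + 16x + 5)). -/
noncomputable def chi (x : ℝ) : ℝ :=
  Real.log (2 * Real.sqrt (4 * x ^ 2 + 4 * x + 1) + Real.sqrt (16 * x ^ 2 + 16 * x + 5))

/-- f_s(x) = ξ(x+1/2)^(−1/2)·(A·exp(i·ω·χ(x)) − s·(conj A)·exp(−i·ω·χ(x))). -/
noncomputable def fpw (A : ℂ) (ω s x : ℝ) : ℂ :=
  ((xi (x + 1/2) ^ (-(1/2) : ℝ) : ℝ) : ℂ) *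
    (A * Complex.exp (Complex.I * ω * chi x) -
      (s : ℂ) * (starRingEnd ℂ) A * Complex.exp (-(Complex.I * ω * chi x)))

/-- φ : ℕ → ℂ solves the eigenvalue recurrence for ω (φ n is the coefficient at spin
j = n/2): φ 0 = 0 and ω·φ n = i·(n/2 + 3/4)·φ(n+1) − i·(n/2 + 1/4)·φ(n−1) for n ≥ 1. -/
def SolvesRec (ω : ℝ) (φ : ℕ → ℂ) : Prop :=
  φ 0 = 0 ∧ ∀ n : ℕ, 1 ≤ n →
    (ω : ℂ) * φ n =
      Complex.I * ((n : ℂ) / 2 + 3 / 4) * φ (n + 1) -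
        Complex.I * ((n : ℂ) / 2 + 1 / 4) * φ (n - 1)

/-- φ has plane-wave asymptotics with amplitude A: there exist C > 0, Δ > 1 and N₀
such that |φ n − f_{(−1)^n}(n/2)| ≤ C·(n/2)^(−Δ) for all n ≥ N₀. -/
def PlaneWaveAsymp (A : ℂ) (ω : ℝ) (φ : ℕ → ℂ) : Prop :=
  ∃ C : ℝ, 0 < C ∧ ∃ Δ : ℝ, 1 < Δ ∧ ∃ N₀ : ℕ, ∀ n : ℕ, N₀ ≤ n →
    ‖φ n - fpw A ω ((-1 : ℝ) ^ n) ((n : ℝ) / 2)‖ ≤ C * ((n : ℝ) / 2) ^ (-Δ)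

set_option maxHeartbeats 1000000

lemma chi_eq_arsinh {x : ℝ} (hx : 0 ≤ x) : chi x = Real.arsinh (4 * x + 2) := by
  rw [chi, Real.arsinh]
  have h1 : 4 * x ^ 2 + 4 * x + 1 = (2 * x + 1) ^ 2 := by ring
  have h2 : 16 * x ^ 2 + 16 * x + 5 = 1 + (4 * x + 2) ^ 2 := by ring
  rw [h1, h2, Real.sqrt_sq (by linarith)]
  ring_nf

lemma arsinh_sub_le {a b : ℝ} (ha : 0 < a) (hab : a ≤ b) :
    Real.arsinh b - Real.arsinh a ≤ (b - a) / a := by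
  have key : ‖Real.arsinh b - Real.arsinh a‖ ≤ a⁻¹ * ‖b - a‖ := by
    apply Convex.norm_image_sub_le_of_norm_hasDerivWithin_le
      (f' := fun x => (Real.sqrt (1 + x ^ 2))⁻¹) (s := Set.Icc a b)
      (fun x _ => (Real.hasDerivAt_arsinh x).hasDerivWithinAt)
      ?_ (convex_Icc a b) (Set.left_mem_Icc.2 hab) (Set.right_mem_Icc.2 hab)
    intro x hx
    have hxa : a ≤ x := hx.1
    have h1 : a ≤ Real.sqrt (1 + x ^ 2) := by
      have : a ≤ Real.sqrt (x ^ 2) := by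
        rw [Real.sqrt_sq (le_trans ha.le hxa)]; exact hxa
      refine this.trans (Real.sqrt_le_sqrt (by linarith))
    rw [norm_inv, Real.norm_of_nonneg (Real.sqrt_nonneg _)]
    exact inv_anti₀ ha h1
  rw [Real.norm_of_nonneg (sub_nonneg.2 (Real.arsinh_le_arsinh.2 hab)),
    Real.norm_of_nonneg (by linarith)] at key
  calc Real.arsinh b - Real.arsinh a ≤ a⁻¹ * (b - a) := key
    _ = (b - a) / a := by rw [div_eq_inv_mul]

lemma chi_mono {x y : ℝ} (hx : 0 ≤ x) (hxy : x ≤ y) : chi x ≤ chi y := by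
  rw [chi_eq_arsinh hx, chi_eq_arsinh (hx.trans hxy)]
  exact Real.arsinh_le_arsinh.2 (by linarith)

/-- increments of chi along half-integers -/
lemma chi_inc (n : ℕ) : chi (((n:ℝ) + 1) / 2) - chi ((n:ℝ) / 2) ≤ 1 / ((n:ℝ) + 1) := by
  have hn : (0:ℝ) ≤ n := Nat.cast_nonneg n
  rw [chi_eq_arsinh (by positivity), chi_eq_arsinh (by positivity)]
  have h := arsinh_sub_le (a := 4 * ((n:ℝ)/2) + 2) (b := 4 * (((n:ℝ)+1)/2) + 2)
    (by positivity) (by linarith)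
  calc _ ≤ (4 * (((n:ℝ)+1)/2) + 2 - (4 * ((n:ℝ)/2) + 2)) / (4 * ((n:ℝ)/2) + 2) := h
    _ = 2 / (2 * (n:ℝ) + 2) := by ring_nf
    _ = 1 / ((n:ℝ) + 1) := by rw [div_eq_div_iff (by positivity) (by positivity)]; ring

lemma chi_lower (n : ℕ) : Real.log ((n:ℝ) + 2) ≤ chi ((n:ℝ) / 2) := by
  have hn : (0:ℝ) ≤ n := Nat.cast_nonneg n
  rw [chi_eq_arsinh (by positivity), Real.arsinh]
  apply Real.log_le_log (by positivity)
  have h1 : (0:ℝ) ≤ Real.sqrt (1 + (4 * ((n:ℝ)/2) + 2) ^ 2) := Real.sqrt_nonneg _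
  nlinarith

lemma chi_pos (n : ℕ) : 0 < chi ((n:ℝ) / 2) := by
  have := chi_lower n
  have : (0:ℝ) < Real.log ((n:ℝ) + 2) := Real.log_pos (by push_cast; linarith [Nat.cast_nonneg (α := ℝ) n])
  linarith [chi_lower n]


/-- Schwartz derivative bound with quadratic decay, in MVT form. -/
lemma schwartz_mvt (g : SchwartzMap ℝ ℝ) :
    ∃ Cg : ℝ, 0 < Cg ∧ ∀ a b : ℝ, 0 ≤ a → a ≤ b →
      |g b - g a| ≤ Cg / (1 + a ^ 2) * (b - a) := by
  set g' := SchwartzMap.derivCLM ℝ ℝ g with hg'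
  obtain ⟨C0, hC0pos, hC0⟩ := g'.decay 0 0
  obtain ⟨C2, hC2pos, hC2⟩ := g'.decay 2 0
  refine ⟨C0 + C2 + 1, by positivity, fun a b ha hab => ?_⟩
  have hbound : ∀ x : ℝ, (1 + x ^ 2) * ‖deriv g x‖ ≤ C0 + C2 + 1 := by
    intro x
    have h0 := hC0 x
    have h2 := hC2 x
    simp only [norm_iteratedFDeriv_zero, pow_zero, one_mul] at h0 h2
    rw [SchwartzMap.derivCLM_apply] at h0 h2
    rw [Real.norm_eq_abs, sq_abs] at h2
    nlinarith [norm_nonneg (deriv g x)]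
  have key : ‖g b - g a‖ ≤ (C0 + C2 + 1) / (1 + a ^ 2) * ‖b - a‖ := by
    apply Convex.norm_image_sub_le_of_norm_hasDerivWithin_le
      (f' := fun x => deriv g x) (s := Set.Icc a b)
      (fun x _ => (g.differentiableAt.hasDerivAt).hasDerivWithinAt) ?_
      (convex_Icc a b) (Set.left_mem_Icc.2 hab) (Set.right_mem_Icc.2 hab)
    intro x hx
    have hxa : a ≤ x := hx.1
    have h2 := hbound x
    rw [le_div_iff₀ (by positivity)]
    have hx2 : a ^ 2 ≤ x ^ 2 := by nlinarith
    nlinarith [norm_nonneg (deriv g x)]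
  rw [Real.norm_of_nonneg (sub_nonneg.2 hab)] at key
  rwa [← Real.norm_eq_abs]


lemma bertrand_summable :
    Summable (fun n : ℕ => 1 / (((n:ℝ) + 1) * Real.log ((n:ℝ) + 2) ^ 3)) := by
  have hf : Summable (fun j : ℕ => ((j:ℝ) * Real.log ((j:ℝ) + 1) ^ 3)⁻¹) := by
    rw [← summable_condensed_iff_of_nonneg
      (fun n => by
        have h0 : (0:ℝ) ≤ Real.log ((n:ℝ) + 1) := Real.log_nonneg (by
          have : (0:ℝ) ≤ (n:ℝ) := Nat.cast_nonneg n
          linarith)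
        positivity)
      (fun m n hm hmn => ?anti)]
    case anti =>
      have hmn' : (m:ℝ) ≤ (n:ℝ) := by exact_mod_cast hmn
      have hm1 : (1:ℝ) ≤ (m:ℝ) := by exact_mod_cast hm
      have h1 : (0:ℝ) < Real.log ((m:ℝ) + 1) := Real.log_pos (by linarith)
      have h2 : Real.log ((m:ℝ) + 1) ≤ Real.log ((n:ℝ) + 1) :=
        Real.log_le_log (by linarith) (by linarith)
      have h3 : Real.log ((m:ℝ) + 1) ^ 3 ≤ Real.log ((n:ℝ) + 1) ^ 3 :=
        pow_le_pow_left₀ h1.le h2 3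
      apply inv_anti₀
      · positivity
      · exact mul_le_mul hmn' h3 (by positivity) (Nat.cast_nonneg n)
    rw [← summable_nat_add_iff 1]
    have hbd : Summable (fun k : ℕ => (Real.log 2)⁻¹ ^ 3 * (1 / ((k:ℝ) + 1) ^ 3)) := by
      apply Summable.mul_left
      have h := (summable_nat_add_iff (f := fun n : ℕ => 1 / (n:ℝ) ^ 3) 1).2
        (Real.summable_one_div_nat_pow.2 (by norm_num))
      simpa using h
    apply hbd.of_nonneg_of_le (fun k => ?nonneg) (fun k => ?le)
    case nonneg =>
      have hcast : ((2 ^ (k+1) : ℕ) : ℝ) = 2 ^ (k+1) := by push_cast; ring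
      have h0 : (0:ℝ) ≤ Real.log (((2 ^ (k+1) : ℕ)) + 1) := Real.log_nonneg (by
        rw [hcast]; have : (0:ℝ) ≤ 2 ^ (k+1) := by positivity
        linarith)
      positivity
    case le =>
      have hcast : ((2 ^ (k+1) : ℕ) : ℝ) = 2 ^ (k+1) := by push_cast; ring
      have hp : (0:ℝ) < 2 ^ (k+1) := by positivity
      have hlogpos : (0:ℝ) < ((k:ℝ)+1) * Real.log 2 :=
        mul_pos (by positivity) (Real.log_pos one_lt_two)
      have hlog : ((k:ℝ) + 1) * Real.log 2 ≤ Real.log ((2:ℝ) ^ (k+1) + 1) := by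
        calc ((k:ℝ) + 1) * Real.log 2 = Real.log ((2:ℝ) ^ (k+1)) := by
              rw [Real.log_pow]; push_cast; ring
          _ ≤ Real.log ((2:ℝ) ^ (k+1) + 1) := Real.log_le_log hp (by linarith)
      calc (2:ℝ) ^ (k+1) * (((2 ^ (k+1) : ℕ) : ℝ) * Real.log (((2 ^ (k+1) : ℕ) : ℝ) + 1) ^ 3)⁻¹
          = (Real.log ((2:ℝ) ^ (k+1) + 1) ^ 3)⁻¹ := by
            rw [hcast, mul_inv, ← mul_assoc, mul_inv_cancel₀ hp.ne', one_mul]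
        _ ≤ ((((k:ℝ)+1) * Real.log 2) ^ 3)⁻¹ := by
            apply inv_anti₀ (by positivity) (pow_le_pow_left₀ hlogpos.le hlog 3)
        _ = (Real.log 2)⁻¹ ^ 3 * (1 / ((k:ℝ) + 1) ^ 3) := by
            rw [mul_pow, mul_inv, inv_pow]; ring
  have h1 := (summable_nat_add_iff 1).2 hf
  apply h1.congr
  intro n
  push_cast
  rw [one_div, show ((n:ℝ)+1+1) = ((n:ℝ)+2) by ring]


lemma fpw_norm_le (A : ℂ) (ω s x : ℝ) (hs : |s| = 1) (hx : 0 ≤ x) :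
    ‖fpw A ω s x‖ ≤ (Real.sqrt (x + 1/2))⁻¹ * (2 * ‖A‖) := by
  have hx2 : (0:ℝ) < x + 1/2 := by linarith
  have hxi : x + 1/2 ≤ xi (x + 1/2) := by
    rw [xi]
    calc x + 1/2 = Real.sqrt ((x + 1/2) ^ 2) := (Real.sqrt_sq hx2.le).symm
      _ ≤ _ := Real.sqrt_le_sqrt (by linarith)
  have hrpow : xi (x + 1/2) ^ (-(1/2) : ℝ) ≤ (x + 1/2) ^ (-(1/2) : ℝ) :=
    Real.rpow_le_rpow_of_nonpos hx2 hxi (by norm_num)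
  have hrpow_eq : (x + 1/2) ^ (-(1/2) : ℝ) = (Real.sqrt (x + 1/2))⁻¹ := by
    rw [Real.rpow_neg hx2.le, Real.sqrt_eq_rpow]
  have he1 : ‖Complex.exp (Complex.I * ω * chi x)‖ = 1 := by
    have h : Complex.I * (ω : ℂ) * (chi x : ℂ) = ((ω * chi x : ℝ) : ℂ) * Complex.I := by
      push_cast; ring
    rw [h, Complex.norm_exp_ofReal_mul_I]
  have he2 : ‖Complex.exp (-(Complex.I * ω * chi x))‖ = 1 := by
    have h : -(Complex.I * (ω : ℂ) * (chi x : ℂ)) = ((-(ω * chi x) : ℝ) : ℂ) * Complex.I := by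
      push_cast; ring
    rw [h, Complex.norm_exp_ofReal_mul_I]
  have hsn : ‖((s : ℝ) : ℂ)‖ = 1 := by
    rw [Complex.norm_real, Real.norm_eq_abs, hs]
  rw [fpw, norm_mul]
  have h1 : ‖A * Complex.exp (Complex.I * ω * chi x) -
      (s : ℂ) * (starRingEnd ℂ) A * Complex.exp (-(Complex.I * ω * chi x))‖ ≤ 2 * ‖A‖ := by
    calc _ ≤ ‖A * Complex.exp (Complex.I * ω * chi x)‖ +
        ‖(s : ℂ) * (starRingEnd ℂ) A * Complex.exp (-(Complex.I * ω * chi x))‖ :=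
          norm_sub_le _ _
      _ = ‖A‖ * 1 + 1 * ‖A‖ * 1 := by
          rw [norm_mul, norm_mul, norm_mul, he1, he2, hsn, RCLike.norm_conj]
      _ = 2 * ‖A‖ := by ring
  have h2 : ‖((xi (x + 1/2) ^ (-(1/2) : ℝ) : ℝ) : ℂ)‖ = xi (x + 1/2) ^ (-(1/2) : ℝ) := by
    rw [Complex.norm_real, Real.norm_eq_abs, abs_of_nonneg]
    exact Real.rpow_nonneg (by rw [xi]; positivity) _
  rw [h2]
  apply mul_le_mul (hrpow.trans hrpow_eq.le) h1 (norm_nonneg _)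
  positivity

lemma phi_bound (ω : ℝ) (A : ℂ) (φ : ℕ → ℂ) (hasymp : PlaneWaveAsymp A ω φ) :
    ∃ Cφ : ℝ, 0 < Cφ ∧ ∀ j : ℕ, ‖φ j‖ * Real.sqrt ((j:ℝ) + 1) ≤ Cφ := by
  obtain ⟨C, hC, Δ, hΔ, N₀, hN⟩ := hasymp
  set N₁ := max N₀ 2 with hN₁
  set K := 2 * Real.sqrt 2 * ‖A‖ + 2 * C with hK
  refine ⟨(∑ j ∈ Finset.range N₁, ‖φ j‖ * Real.sqrt ((j:ℝ) + 1)) + K + 1, ?_, fun j => ?_⟩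
  · have hsum : 0 ≤ ∑ j ∈ Finset.range N₁, ‖φ j‖ * Real.sqrt ((j:ℝ) + 1) :=
      Finset.sum_nonneg fun i _ => by positivity
    have hK0 : 0 ≤ K := by positivity
    linarith
  rcases lt_or_ge j N₁ with hj | hj
  · have hmem : j ∈ Finset.range N₁ := Finset.mem_range.2 hj
    have hle : ‖φ j‖ * Real.sqrt ((j:ℝ) + 1) ≤
        ∑ i ∈ Finset.range N₁, ‖φ i‖ * Real.sqrt ((i:ℝ) + 1) := by
      simpa using Finset.single_le_sum
        (f := fun i : ℕ => ‖φ i‖ * Real.sqrt ((i:ℝ) + 1)) (fun i _ => by positivity) hmem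
    have hK0 : 0 ≤ K := by positivity
    linarith
  · -- large j
    have hj2 : 2 ≤ j := le_trans (le_max_right _ _) hj
    have hj0 : N₀ ≤ j := le_trans (le_max_left _ _) hj
    have hjr : (2:ℝ) ≤ (j:ℝ) := by exact_mod_cast hj2
    have hfpw := fpw_norm_le A ω ((-1:ℝ)^j) ((j:ℝ)/2) (by
      rw [abs_pow, abs_neg, abs_one, one_pow]) (by linarith)
    have htri : ‖φ j‖ ≤ C * ((j:ℝ)/2) ^ (-Δ) +
        (Real.sqrt ((j:ℝ)/2 + 1/2))⁻¹ * (2 * ‖A‖) := by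
      calc ‖φ j‖ = ‖(φ j - fpw A ω ((-1:ℝ)^j) ((j:ℝ)/2)) + fpw A ω ((-1:ℝ)^j) ((j:ℝ)/2)‖ := by
            congr 1; ring
        _ ≤ ‖φ j - fpw A ω ((-1:ℝ)^j) ((j:ℝ)/2)‖ + ‖fpw A ω ((-1:ℝ)^j) ((j:ℝ)/2)‖ :=
            norm_add_le _ _
        _ ≤ _ := add_le_add (hN j hj0) hfpw
    have hhalf : (j:ℝ)/2 + 1/2 = ((j:ℝ)+1)/2 := by ring
    set S := Real.sqrt ((j:ℝ)+1) with hS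
    have hSpos : 0 < S := Real.sqrt_pos.2 (by linarith)
    have hjhalfpos : (0:ℝ) < (j:ℝ)/2 := by linarith
    have hsqpos : 0 < Real.sqrt ((j:ℝ)/2) := Real.sqrt_pos.2 hjhalfpos
    -- term 2 : (√((j+1)/2))⁻¹ * (2‖A‖) * S = 2√2‖A‖
    have hs1 : (Real.sqrt (((j:ℝ)+1)/2))⁻¹ * S = Real.sqrt 2 := by
      rw [Real.sqrt_div (by linarith : (0:ℝ) ≤ (j:ℝ)+1) 2]
      field_simp
      exact hS
    -- term 1
    have hexp : ((j:ℝ)/2) ^ (-Δ) ≤ ((j:ℝ)/2) ^ (-(1/2) : ℝ) :=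
      Real.rpow_le_rpow_of_exponent_le (by linarith) (by linarith)
    have hrpe : ((j:ℝ)/2) ^ (-(1/2) : ℝ) = (Real.sqrt ((j:ℝ)/2))⁻¹ := by
      rw [Real.rpow_neg hjhalfpos.le, Real.sqrt_eq_rpow]
    have hS2 : S ≤ 2 * Real.sqrt ((j:ℝ)/2) := by
      have h4 : Real.sqrt (4 * ((j:ℝ)/2)) = 2 * Real.sqrt ((j:ℝ)/2) := by
        rw [Real.sqrt_mul (by norm_num : (0:ℝ) ≤ 4),
          show (4:ℝ) = 2^2 by norm_num, Real.sqrt_sq (by norm_num : (0:ℝ) ≤ 2)]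
      rw [hS, ← h4]
      exact Real.sqrt_le_sqrt (by linarith)
    have ht1 : (Real.sqrt ((j:ℝ)/2))⁻¹ * S ≤ 2 := by
      rw [inv_mul_le_iff₀ hsqpos]
      linarith
    have hmain : ‖φ j‖ * S ≤ (C * ((j:ℝ)/2) ^ (-Δ)) * S +
        ((Real.sqrt (((j:ℝ)+1)/2))⁻¹ * (2 * ‖A‖)) * S := by
      rw [← add_mul]
      apply mul_le_mul_of_nonneg_right _ hSpos.le
      rw [← hhalf]
      exact htri
    have ht1' : (C * ((j:ℝ)/2) ^ (-Δ)) * S ≤ 2 * C := by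
      calc (C * ((j:ℝ)/2) ^ (-Δ)) * S ≤ (C * (Real.sqrt ((j:ℝ)/2))⁻¹) * S := by
            apply mul_le_mul_of_nonneg_right _ hSpos.le
            exact mul_le_mul_of_nonneg_left (hrpe ▸ hexp) hC.le
        _ = C * ((Real.sqrt ((j:ℝ)/2))⁻¹ * S) := by ring
        _ ≤ C * 2 := mul_le_mul_of_nonneg_left ht1 hC.le
        _ = 2 * C := by ring
    have ht2' : ((Real.sqrt (((j:ℝ)+1)/2))⁻¹ * (2 * ‖A‖)) * S = 2 * Real.sqrt 2 * ‖A‖ := by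
      calc _ = ((Real.sqrt (((j:ℝ)+1)/2))⁻¹ * S) * (2 * ‖A‖) := by ring
        _ = Real.sqrt 2 * (2 * ‖A‖) := by rw [hs1]
        _ = 2 * Real.sqrt 2 * ‖A‖ := by ring
    have hsum : 0 ≤ ∑ i ∈ Finset.range N₁, ‖φ i‖ * Real.sqrt ((i:ℝ) + 1) :=
      Finset.sum_nonneg fun i _ => by positivity
    rw [hK]
    linarith [hmain, ht1', ht2'.le]

lemma term_identity (ω : ℝ) (a b c g0 g1 g2 p0 p1 p2 : ℂ)
    (hr : (ω:ℂ) * p1 = Complex.I * a * p2 - Complex.I * b * p0) :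
    (ω : ℂ) * (c * g1 * p1) - Complex.I * a * (c * g2 * p2) + Complex.I * b * (c * g0 * p0)
      = c * (Complex.I * a * (g1 - g2) * p2 - Complex.I * b * (g1 - g0) * p0) := by
  linear_combination c * g1 * hr

lemma term_norm (a b c d1 d0 p2 p0 : ℂ) :
    ‖c * (Complex.I * a * d1 * p2 - Complex.I * b * d0 * p0)‖ ≤
      ‖c‖ * (‖a‖ * ‖d1‖ * ‖p2‖ + ‖b‖ * ‖d0‖ * ‖p0‖) := by
  rw [norm_mul]
  apply mul_le_mul_of_nonneg_left _ (norm_nonneg c)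
  calc ‖Complex.I * a * d1 * p2 - Complex.I * b * d0 * p0‖
      ≤ ‖Complex.I * a * d1 * p2‖ + ‖Complex.I * b * d0 * p0‖ := norm_sub_le _ _
    _ = ‖a‖ * ‖d1‖ * ‖p2‖ + ‖b‖ * ‖d0‖ * ‖p0‖ := by
        simp [norm_mul, Complex.norm_I]

lemma keyalg (Cg Cφ L k m sk sm E : ℝ) (hsk0 : 0 < sk) (hsm0 : 0 < sm)
    (hsk : sk ^ 2 = k) (hsm : sm ^ 2 = m) (hL : 0 < k ^ 2 + L ^ 2)
    (hE : E = Cg * k ^ 2 / (k ^ 2 + L ^ 2) * (1 / (m * k))) :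
    (sk⁻¹ * (5/4 * m * E * (Cφ / sm)) + sk⁻¹ * (5/4 * m * E * (Cφ / sm))) ^ 2
      = (25/4 * Cg ^ 2 * Cφ ^ 2) * (k / (m * (k ^ 2 + L ^ 2) ^ 2)) := by
  subst hsk hsm hE
  have h1 : sk ≠ 0 := hsk0.ne'
  have h2 : sm ≠ 0 := hsm0.ne'
  have h3 : (sk ^ 2) ^ 2 + L ^ 2 ≠ 0 := hL.ne'
  field_simp
  ring


/-- Weyl-sequence property: if φ solves the eigenvalue recurrence for ω and has
plane-wave asymptotics with amplitude A, g is Schwartz, and for k ≥ 1 one sets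
v_k n = k^(−1/2)·g(χ(n/2)/k)·φ n, then
Σ_{n≥1} |ω·v_k n − i·(n/2 + 3/4)·v_k(n+1) + i·(n/2 + 1/4)·v_k(n−1)|² → 0 as k → ∞,
i.e. ‖(ω − H_I)v_k‖² → 0 in ℓ². -/
theorem weyl_sequence_property (ω : ℝ) (A : ℂ) (φ : ℕ → ℂ)
    (hrec : SolvesRec ω φ) (hasymp : PlaneWaveAsymp A ω φ) (g : SchwartzMap ℝ ℝ)
    (v : ℕ → ℕ → ℂ)
    (hv : ∀ k : ℕ, 1 ≤ k → ∀ n : ℕ,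
      v k n = (((k : ℝ) ^ (-(1/2) : ℝ) : ℝ) : ℂ) * (g (chi ((n : ℝ) / 2) / k) : ℂ) * φ n) :
    Filter.Tendsto
      (fun k : ℕ => ∑' n : ℕ,
        ‖(ω : ℂ) * v k (n + 1) -
            Complex.I * (((n + 1 : ℕ) : ℂ) / 2 + 3 / 4) * v k (n + 2) +
            Complex.I * (((n + 1 : ℕ) : ℂ) / 2 + 1 / 4) * v k n‖ ^ 2)
      Filter.atTop (nhds 0) := by
  obtain ⟨hφ0, hrec2⟩ := hrec
  obtain ⟨Cg, hCg, hg⟩ := schwartz_mvt g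
  obtain ⟨Cφ, hCφ, hφb⟩ := phi_bound ω A φ hasymp
  set C₆ : ℝ := 25/4 * Cg ^ 2 * Cφ ^ 2 with hC₆def
  have hC₆ : 0 < C₆ := by positivity
  -- key bound
  have key : ∀ k : ℕ, 1 ≤ k → ∀ n : ℕ,
      ‖(ω : ℂ) * v k (n + 1) -
          Complex.I * (((n + 1 : ℕ) : ℂ) / 2 + 3 / 4) * v k (n + 2) +
          Complex.I * (((n + 1 : ℕ) : ℂ) / 2 + 1 / 4) * v k n‖ ^ 2 ≤
        C₆ * ((k : ℝ) /
          (((n:ℝ) + 1) * ((k : ℝ) ^ 2 + Real.log ((n:ℝ) + 2) ^ 2) ^ 2)) := by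
    intro k hk n
    have hkr : (1:ℝ) ≤ (k:ℝ) := by exact_mod_cast hk
    have hkr0 : (0:ℝ) < (k:ℝ) := by linarith
    have hnn : (0:ℝ) ≤ (n:ℝ) := Nat.cast_nonneg n
    have hL0 : 0 < Real.log ((n:ℝ) + 2) := Real.log_pos (by linarith)
    set L : ℝ := Real.log ((n:ℝ) + 2) with hLdef
    set E : ℝ := Cg * (k:ℝ) ^ 2 / ((k:ℝ) ^ 2 + L ^ 2) * (1 / (((n:ℝ) + 1) * (k:ℝ)))
      with hEdef
    have hden : (0:ℝ) < (k:ℝ) ^ 2 + L ^ 2 :=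
      add_pos_of_pos_of_nonneg (pow_pos hkr0 2) (sq_nonneg L)
    -- recurrence at n+1
    have hr := hrec2 (n+1) (by omega)
    simp only [Nat.add_sub_cancel] at hr
    rw [hv k hk n, hv k hk (n+1), hv k hk (n+2),
      term_identity ω _ _ _ _ _ _ _ _ _ hr]
    -- norm bound
    have hnorm := term_norm (((n + 1 : ℕ) : ℂ) / 2 + 3 / 4) (((n + 1 : ℕ) : ℂ) / 2 + 1 / 4)
      ((((k : ℝ) ^ (-(1/2) : ℝ) : ℝ) : ℂ))
      ((g (chi (((n+1 : ℕ) : ℝ) / 2) / (k:ℝ)) : ℂ) - (g (chi (((n+2 : ℕ) : ℝ) / 2) / (k:ℝ)) : ℂ))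
      ((g (chi (((n+1 : ℕ) : ℝ) / 2) / (k:ℝ)) : ℂ) - (g (chi ((n : ℝ) / 2) / (k:ℝ)) : ℂ))
      (φ (n+2)) (φ n)
    -- individual bounds
    have hcnorm : ‖((((k : ℝ) ^ (-(1/2) : ℝ) : ℝ)) : ℂ)‖ = (Real.sqrt (k:ℝ))⁻¹ := by
      rw [Complex.norm_real, Real.norm_eq_abs,
        abs_of_nonneg (Real.rpow_nonneg hkr0.le _), Real.rpow_neg hkr0.le,
        Real.sqrt_eq_rpow]
    have hanorm : ‖(((n + 1 : ℕ) : ℂ) / 2 + 3 / 4)‖ ≤ 5/4 * ((n:ℝ) + 1) := by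
      have he : (((n + 1 : ℕ) : ℂ) / 2 + 3 / 4) = (((((n:ℝ)+1)/2 + 3/4 : ℝ)) : ℂ) := by
        push_cast; ring
      rw [he, Complex.norm_real, Real.norm_eq_abs, abs_of_nonneg (by positivity)]
      linarith
    have hbnorm : ‖(((n + 1 : ℕ) : ℂ) / 2 + 1 / 4)‖ ≤ 5/4 * ((n:ℝ) + 1) := by
      have he : (((n + 1 : ℕ) : ℂ) / 2 + 1 / 4) = (((((n:ℝ)+1)/2 + 1/4 : ℝ)) : ℂ) := by
        push_cast; ring
      rw [he, Complex.norm_real, Real.norm_eq_abs, abs_of_nonneg (by positivity)]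
      linarith
    -- chi facts
    have hcast1 : ((n+1:ℕ):ℝ) = (n:ℝ)+1 := by push_cast; ring
    have hcast2 : ((n+2:ℕ):ℝ) = (n:ℝ)+1+1 := by push_cast; ring
    have hlow0 : L ≤ chi ((n:ℝ)/2) := chi_lower n
    have hlow1 : L ≤ chi (((n:ℝ)+1)/2) := by
      have h := chi_mono (by positivity : (0:ℝ) ≤ (n:ℝ)/2)
        (by linarith : (n:ℝ)/2 ≤ ((n:ℝ)+1)/2)
      linarith
    have hmono1 : chi (((n:ℝ)+1)/2) ≤ chi (((n:ℝ)+1+1)/2) :=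
      chi_mono (by positivity) (by linarith)
    have hmono0 : chi ((n:ℝ)/2) ≤ chi (((n:ℝ)+1)/2) :=
      chi_mono (by positivity) (by linarith)
    have hinc1 : chi (((n:ℝ)+1+1)/2) - chi (((n:ℝ)+1)/2) ≤ 1/((n:ℝ)+1+1) := by
      have h := chi_inc (n+1); push_cast at h; exact h
    have hinc0 : chi (((n:ℝ)+1)/2) - chi ((n:ℝ)/2) ≤ 1/((n:ℝ)+1) := chi_inc n
    -- the two g-difference bounds
    have hEfac : 0 ≤ Cg * (k:ℝ) ^ 2 / ((k:ℝ) ^ 2 + L ^ 2) :=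
      div_nonneg (mul_nonneg hCg.le (sq_nonneg _)) hden.le
    have hfrac : ∀ u : ℝ, L / (k:ℝ) ≤ u →
        Cg / (1 + u ^ 2) ≤ Cg * (k:ℝ) ^ 2 / ((k:ℝ) ^ 2 + L ^ 2) := by
      intro u hu
      have hu0 : 0 ≤ u := le_trans (div_nonneg hL0.le hkr0.le) hu
      rw [div_le_div_iff₀ (by positivity) hden]
      have hkl : L ≤ (k:ℝ) * u := by
        have := (div_le_iff₀ hkr0).1 hu
        linarith
      have hsq : L ^ 2 ≤ ((k:ℝ) * u) ^ 2 := pow_le_pow_left₀ hL0.le hkl 2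
      have h5 : Cg * L ^ 2 ≤ Cg * ((k:ℝ) * u) ^ 2 := mul_le_mul_of_nonneg_left hsq hCg.le
      nlinarith [h5]
    have hd1 : |g (chi (((n:ℝ)+1)/2) / (k:ℝ)) - g (chi (((n:ℝ)+1+1)/2) / (k:ℝ))| ≤ E := by
      set u1 := chi (((n:ℝ)+1)/2) / (k:ℝ) with hu1def
      set u2 := chi (((n:ℝ)+1+1)/2) / (k:ℝ) with hu2def
      have hu1L : L / (k:ℝ) ≤ u1 := by
        rw [hu1def]; gcongr
      have hu1nn : 0 ≤ u1 := le_trans (by positivity) hu1L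
      have hu12 : u1 ≤ u2 := by rw [hu1def, hu2def]; gcongr
      have habs : |g u2 - g u1| ≤ Cg / (1 + u1 ^ 2) * (u2 - u1) := hg u1 u2 hu1nn hu12
      have hgap : u2 - u1 ≤ 1 / (((n:ℝ)+1) * (k:ℝ)) := by
        have heq : u2 - u1 = (chi (((n:ℝ)+1+1)/2) - chi (((n:ℝ)+1)/2)) / (k:ℝ) := by
          rw [hu1def, hu2def]; ring
        rw [heq]
        calc (chi (((n:ℝ)+1+1)/2) - chi (((n:ℝ)+1)/2)) / (k:ℝ)
            ≤ (1/((n:ℝ)+1+1)) / (k:ℝ) := by gcongr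
          _ ≤ (1/((n:ℝ)+1)) / (k:ℝ) := by
              gcongr <;> linarith
          _ = 1 / (((n:ℝ)+1) * (k:ℝ)) := by rw [div_div]
      rw [abs_sub_comm, hEdef]
      calc |g u2 - g u1| ≤ Cg / (1 + u1 ^ 2) * (u2 - u1) := habs
        _ ≤ (Cg * (k:ℝ) ^ 2 / ((k:ℝ) ^ 2 + L ^ 2)) * (1 / (((n:ℝ)+1) * (k:ℝ))) :=
            mul_le_mul (hfrac u1 hu1L) hgap (by linarith) hEfac
    have hd0 : |g (chi (((n:ℝ)+1)/2) / (k:ℝ)) - g (chi ((n:ℝ)/2) / (k:ℝ))| ≤ E := by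
      set u0 := chi ((n:ℝ)/2) / (k:ℝ) with hu0def
      set u1 := chi (((n:ℝ)+1)/2) / (k:ℝ) with hu1def
      have hu0L : L / (k:ℝ) ≤ u0 := by rw [hu0def]; gcongr
      have hu0nn : 0 ≤ u0 := le_trans (by positivity) hu0L
      have hu01 : u0 ≤ u1 := by rw [hu0def, hu1def]; gcongr
      have habs : |g u1 - g u0| ≤ Cg / (1 + u0 ^ 2) * (u1 - u0) := hg u0 u1 hu0nn hu01
      have hgap : u1 - u0 ≤ 1 / (((n:ℝ)+1) * (k:ℝ)) := by
        have heq : u1 - u0 = (chi (((n:ℝ)+1)/2) - chi ((n:ℝ)/2)) / (k:ℝ) := by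
          rw [hu0def, hu1def]; ring
        rw [heq]
        calc (chi (((n:ℝ)+1)/2) - chi ((n:ℝ)/2)) / (k:ℝ)
            ≤ (1/((n:ℝ)+1)) / (k:ℝ) := by gcongr
          _ = 1 / (((n:ℝ)+1) * (k:ℝ)) := by rw [div_div]
      rw [hEdef]
      calc |g u1 - g u0| ≤ Cg / (1 + u0 ^ 2) * (u1 - u0) := habs
        _ ≤ (Cg * (k:ℝ) ^ 2 / ((k:ℝ) ^ 2 + L ^ 2)) * (1 / (((n:ℝ)+1) * (k:ℝ))) :=
            mul_le_mul (hfrac u0 hu0L) hgap (by linarith) hEfac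
    -- phi bounds
    have hs1 : (0:ℝ) < Real.sqrt ((n:ℝ)+1) := Real.sqrt_pos.2 (by linarith)
    have hp2 : ‖φ (n+2)‖ ≤ Cφ / Real.sqrt ((n:ℝ)+1) := by
      have h := hφb (n+2)
      rw [le_div_iff₀ hs1]
      calc ‖φ (n+2)‖ * Real.sqrt ((n:ℝ)+1)
          ≤ ‖φ (n+2)‖ * Real.sqrt (((n+2:ℕ):ℝ)+1) := by
            apply mul_le_mul_of_nonneg_left _ (norm_nonneg _)
            apply Real.sqrt_le_sqrt
            rw [hcast2]; linarith
        _ ≤ Cφ := h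
    have hp0 : ‖φ n‖ ≤ Cφ / Real.sqrt ((n:ℝ)+1) := by
      rw [le_div_iff₀ hs1]; exact hφb n
    -- cast the complex differences to real abs
    have hdc1 : ‖(g (chi (((n+1 : ℕ) : ℝ) / 2) / (k:ℝ)) : ℂ) -
        (g (chi (((n+2 : ℕ) : ℝ) / 2) / (k:ℝ)) : ℂ)‖ ≤ E := by
      rw [← Complex.ofReal_sub, Complex.norm_real, Real.norm_eq_abs, hcast1, hcast2]
      exact hd1
    have hdc0 : ‖(g (chi (((n+1 : ℕ) : ℝ) / 2) / (k:ℝ)) : ℂ) -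
        (g (chi ((n : ℝ) / 2) / (k:ℝ)) : ℂ)‖ ≤ E := by
      rw [← Complex.ofReal_sub, Complex.norm_real, Real.norm_eq_abs, hcast1]
      exact hd0
    -- assemble
    have hE0 : 0 ≤ E := by
      rw [hEdef]; exact mul_nonneg hEfac (by positivity)
    have hmE0 : 0 ≤ 5/4 * ((n:ℝ)+1) * E := mul_nonneg (by positivity) hE0
    have hXbound : ‖((((k : ℝ) ^ (-(1/2) : ℝ) : ℝ)) : ℂ)‖ *
        (‖(((n + 1 : ℕ) : ℂ) / 2 + 3 / 4)‖ *
          ‖(g (chi (((n+1 : ℕ) : ℝ) / 2) / (k:ℝ)) : ℂ) -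
            (g (chi (((n+2 : ℕ) : ℝ) / 2) / (k:ℝ)) : ℂ)‖ * ‖φ (n+2)‖ +
        ‖(((n + 1 : ℕ) : ℂ) / 2 + 1 / 4)‖ *
          ‖(g (chi (((n+1 : ℕ) : ℝ) / 2) / (k:ℝ)) : ℂ) -
            (g (chi ((n : ℝ) / 2) / (k:ℝ)) : ℂ)‖ * ‖φ n‖) ≤
        (Real.sqrt (k:ℝ))⁻¹ * (5/4 * ((n:ℝ)+1) * E * (Cφ / Real.sqrt ((n:ℝ)+1))) +
        (Real.sqrt (k:ℝ))⁻¹ * (5/4 * ((n:ℝ)+1) * E * (Cφ / Real.sqrt ((n:ℝ)+1))) := by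
      rw [hcnorm, mul_add]
      have hsk0 : (0:ℝ) ≤ (Real.sqrt (k:ℝ))⁻¹ := by positivity
      apply add_le_add
      · apply mul_le_mul_of_nonneg_left _ hsk0
        apply mul_le_mul _ hp2 (norm_nonneg _) hmE0
        exact mul_le_mul hanorm hdc1 (norm_nonneg _) (by positivity)
      · apply mul_le_mul_of_nonneg_left _ hsk0
        apply mul_le_mul _ hp0 (norm_nonneg _) hmE0
        exact mul_le_mul hbnorm hdc0 (norm_nonneg _) (by positivity)
    have hfull := hnorm.trans hXbound
    have hsq := pow_le_pow_left₀ (norm_nonneg _) hfull 2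
    refine hsq.trans_eq ?_
    rw [hC₆def]
    exact keyalg Cg Cφ L (k:ℝ) ((n:ℝ)+1) (Real.sqrt (k:ℝ)) (Real.sqrt ((n:ℝ)+1)) E
      (Real.sqrt_pos.2 hkr0) hs1 (Real.sq_sqrt hkr0.le) (Real.sq_sqrt (by linarith))
      hden hEdef
  -- dominating bound
  have hBsum : Summable (fun n : ℕ =>
      C₆ * (1 / (2 * (((n:ℝ)+1) * Real.log ((n:ℝ)+2) ^ 3)))) := by
    apply (bertrand_summable.mul_left (C₆ / 2)).congr
    intro n
    simp only [one_div, mul_inv]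
    ring
  -- apply dominated convergence for tsums
  have main := tendsto_tsum_of_dominated_convergence
    (𝓕 := Filter.atTop)
    (f := fun (k : ℕ) (n : ℕ) =>
      ‖(ω : ℂ) * v k (n + 1) -
          Complex.I * (((n + 1 : ℕ) : ℂ) / 2 + 3 / 4) * v k (n + 2) +
          Complex.I * (((n + 1 : ℕ) : ℂ) / 2 + 1 / 4) * v k n‖ ^ 2)
    (g := fun _ : ℕ => (0:ℝ))
    (bound := fun n : ℕ => C₆ * (1 / (2 * (((n:ℝ)+1) * Real.log ((n:ℝ)+2) ^ 3))))
    hBsum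
    (by
      intro n
      refine squeeze_zero' (g := fun k : ℕ => C₆ * (((k:ℝ)) ^ 3)⁻¹)
        (Filter.Eventually.of_forall (fun k => by positivity)) ?_ ?_
      · filter_upwards [Filter.eventually_ge_atTop 1] with k hk
        refine (key k hk n).trans ?_
        apply mul_le_mul_of_nonneg_left _ hC₆.le
        have hkr : (1:ℝ) ≤ (k:ℝ) := by exact_mod_cast hk
        have hkr0 : (0:ℝ) < (k:ℝ) := by linarith
        have hnn : (0:ℝ) ≤ (n:ℝ) := Nat.cast_nonneg n
        set L : ℝ := Real.log ((n:ℝ) + 2)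
        have hden : (0:ℝ) < (k:ℝ) ^ 2 + L ^ 2 :=
          add_pos_of_pos_of_nonneg (pow_pos hkr0 2) (sq_nonneg L)
        have hden2 : (0:ℝ) < ((n:ℝ)+1) * ((k:ℝ) ^ 2 + L ^ 2) ^ 2 :=
          mul_pos (by linarith) (pow_pos hden 2)
        rw [div_le_iff₀ hden2, inv_mul_eq_div, le_div_iff₀ (by positivity)]
        have e1 : (k:ℝ)^4 ≤ ((k:ℝ)^2+L^2)^2 := by
          nlinarith [sq_nonneg L, sq_nonneg (k:ℝ), mul_nonneg (sq_nonneg (k:ℝ)) (sq_nonneg L)]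
        nlinarith [e1, mul_le_mul_of_nonneg_right
          (show (1:ℝ) ≤ (n:ℝ)+1 by linarith) (sq_nonneg ((k:ℝ)^2+L^2))]
      · have h1 : Filter.Tendsto (fun k : ℕ => ((k:ℝ)) ^ 3) Filter.atTop Filter.atTop :=
          (Filter.tendsto_pow_atTop (by norm_num)).comp tendsto_natCast_atTop_atTop
        have h2 := h1.inv_tendsto_atTop
        have h3 := h2.const_mul C₆
        simpa using h3)
    (by
      filter_upwards [Filter.eventually_ge_atTop 1] with k hk
      intro n
      rw [Real.norm_of_nonneg (by positivity)]
      refine (key k hk n).trans ?_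
      apply mul_le_mul_of_nonneg_left _ hC₆.le
      have hkr : (1:ℝ) ≤ (k:ℝ) := by exact_mod_cast hk
      have hkr0 : (0:ℝ) < (k:ℝ) := by linarith
      have hnn : (0:ℝ) ≤ (n:ℝ) := Nat.cast_nonneg n
      have hL0 : 0 < Real.log ((n:ℝ) + 2) := Real.log_pos (by linarith)
      set L : ℝ := Real.log ((n:ℝ) + 2)
      have hden : (0:ℝ) < (k:ℝ) ^ 2 + L ^ 2 :=
        add_pos_of_pos_of_nonneg (pow_pos hkr0 2) (sq_nonneg L)
      have hden2 : (0:ℝ) < ((n:ℝ)+1) * ((k:ℝ) ^ 2 + L ^ 2) ^ 2 :=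
        mul_pos (by linarith) (pow_pos hden 2)
      rw [div_le_div_iff₀ hden2 (by positivity)]
      have hAM : 2*(k:ℝ)*L^3 ≤ ((k:ℝ)^2+L^2)^2 := by
        nlinarith [mul_nonneg (sq_nonneg L) (sq_nonneg ((k:ℝ) - L)), sq_nonneg ((k:ℝ)*(k:ℝ)),
          mul_nonneg (sq_nonneg (k:ℝ)) (sq_nonneg L)]
      calc (k:ℝ) * (2 * (((n:ℝ)+1) * L^3)) = ((n:ℝ)+1) * (2*(k:ℝ)*L^3) := by ring
        _ ≤ ((n:ℝ)+1) * (((k:ℝ)^2+L^2)^2) := by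
            apply mul_le_mul_of_nonneg_left hAM (by linarith)
        _ = 1 * (((n:ℝ)+1) * ((k:ℝ)^2+L^2)^2) := by ring)
  simpa using main
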